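/- Let p be a prime, G a finite p-group, and M a finitely generated module over ℤ_p[G] that is free of finite rank as a ℤ_p-module. If M has projective dimension at most 1 over ℤ_p[G], then M is a free ℤ_p[G]-module. -/

import Mathlib

set_option linter.unusedSectionVars false
set_option linter.unusedVariables false
set_option maxHeartbeats 800000

noncomputable section
namespace PadicFreeAux

open MonoidAlgebra Finsupp Submodule

variable {p : ℕ} [Fact p.Prime] {G : Type*} [Group G] [Fintype G]

local notation "Ab" => MonoidAlgebra (ZMod p) G

def SSet (V : Submodule (ZMod p) Ab) : Set Ab :=
  {y | ∃ (g : G) (w : Ab), w ∈ V ∧ y = (MonoidAlgebra.single g (1 : ZMod p) - 1) * w}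

def Wc : ℕ → Submodule (ZMod p) Ab
  | 0 => ⊤
  | (k+1) => Submodule.span (ZMod p) (SSet (Wc k))

def GStable (V : Submodule (ZMod p) Ab) : Prop :=
  ∀ (g : G), ∀ x ∈ V, (MonoidAlgebra.single g (1 : ZMod p)) * x ∈ V

lemma gstable_span (V : Submodule (ZMod p) Ab) (hV : GStable V) :
    GStable (Submodule.span (ZMod p) (SSet V)) := by
  intro h x hx
  have : Submodule.span (ZMod p) (SSet V) ≤
      Submodule.comap (LinearMap.mulLeft (ZMod p) (MonoidAlgebra.single h (1 : ZMod p)))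
        (Submodule.span (ZMod p) (SSet V)) := by
    rw [Submodule.span_le]
    rintro y ⟨g, w, hw, rfl⟩
    simp only [SetLike.mem_coe, Submodule.mem_comap, LinearMap.mulLeft_apply]
    have key : (MonoidAlgebra.single h (1 : ZMod p)) *
        ((MonoidAlgebra.single g (1 : ZMod p) - 1) * w)
        = (MonoidAlgebra.single (h*g) (1:ZMod p) - 1) * w
          - (MonoidAlgebra.single h (1:ZMod p) - 1) * w := by
      rw [← mul_assoc, mul_sub, mul_one, MonoidAlgebra.single_mul_single, mul_one]
      noncomm_ring
    rw [key]
    exact sub_mem (Submodule.subset_span ⟨h*g, w, hw, rfl⟩)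
      (Submodule.subset_span ⟨h, w, hw, rfl⟩)
  exact this hx

lemma gstable_Wc : ∀ k, GStable (Wc (p := p) (G := G) k)
  | 0 => fun _ _ _ => Submodule.mem_top
  | (k+1) => gstable_span _ (gstable_Wc k)

lemma Wc_succ_le (k : ℕ) : Wc (p := p) (G := G) (k+1) ≤ Wc k := by
  rw [Wc, Submodule.span_le]
  rintro y ⟨g, w, hw, rfl⟩
  have := gstable_Wc (p := p) (G := G) k g w hw
  simpa [sub_mul] using sub_mem this hw

instance : Finite Ab :=
  Finite.of_injective (fun (a : MonoidAlgebra (ZMod p) G) (g : G) => a.coeff g)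
    (fun a b h => MonoidAlgebra.ext (Finsupp.ext fun g => congrFun h g))

/-- Key lemma: for a p-group G, a nonzero G-stable subspace V of 𝔽_p[G] is not
contained in the span of (g-1)*V. -/
lemma dual_lemma (hG : IsPGroup p G) (V : Submodule (ZMod p) Ab) (hne : V ≠ ⊥)
    (hGV : ∀ (g : G), ∀ x ∈ V, (MonoidAlgebra.single g (1 : ZMod p)) * x ∈ V)
    (hsub : V ≤ Submodule.span (ZMod p) (SSet V)) : False := by
  classical
  -- the dual space
  set D := (V →ₗ[ZMod p] ZMod p) with hD
  -- the G-action on the dual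
  have hmu : ∀ (g : G) (x : V), ((MonoidAlgebra.single g (1 : ZMod p)) * (x : Ab)) ∈ V :=
    fun g x => hGV g x x.2
  let mu : G → (V →ₗ[ZMod p] V) := fun g =>
    { toFun := fun x => ⟨(MonoidAlgebra.single g⁻¹ (1 : ZMod p)) * (x : Ab), hmu g⁻¹ x⟩
      map_add' := fun x y => by
        ext; simp [mul_add]
      map_smul' := fun c x => by
        ext; simp [mul_smul_comm] }
  letI : SMul G D := ⟨fun g l => l.comp (mu g)⟩
  have smul_def : ∀ (g : G) (l : D) (x : V), (g • l) x
      = l ⟨(MonoidAlgebra.single g⁻¹ (1 : ZMod p)) * (x : Ab), hmu g⁻¹ x⟩ := fun g l x => rfl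
  letI : MulAction G D :=
    { one_smul := fun l => by
        apply LinearMap.ext; intro x
        rw [smul_def]
        congr 1
        ext
        simp [MonoidAlgebra.one_def]
      mul_smul := fun g h l => by
        apply LinearMap.ext; intro x
        rw [smul_def, smul_def, smul_def]
        congr 1
        ext
        simp [MonoidAlgebra.single_mul_single, mul_inv_rev, mul_assoc] }
  -- fixed points are nontrivial
  haveI : Finite D := Finite.of_injective (fun (l : D) => (l : V → ZMod p)) DFunLike.coe_injective
  haveI : FiniteDimensional (ZMod p) Ab :=
    inferInstance
  obtain ⟨v, hvV, hv0⟩ := Submodule.ne_bot_iff V |>.mp hne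
  -- a nonzero functional on V
  have : Nontrivial D := by
    by_contra hcon
    rw [not_nontrivial_iff_subsingleton] at hcon
    have hall : ∀ φ : Module.Dual (ZMod p) V, φ (⟨v, hvV⟩ : V) = 0 := fun φ => by
      rw [Subsingleton.elim φ 0]; rfl
    have := (Module.forall_dual_apply_eq_zero_iff (ZMod p) (⟨v, hvV⟩ : V)).mp hall
    exact hv0 (by simpa using congrArg Subtype.val this)
  haveI : Fintype D := Fintype.ofFinite D
  have hcard : Fintype.card D = Fintype.card (ZMod p) ^ Module.finrank (ZMod p) D :=
    Module.card_eq_pow_finrank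
  have hpD : p ∣ Nat.card D := by
    rw [Nat.card_eq_fintype_card, hcard, ZMod.card]
    exact dvd_pow_self p Module.finrank_pos.ne'
  have hmod := hG.card_modEq_card_fixedPoints D
  have hzero_fixed : (0 : D) ∈ MulAction.fixedPoints G D := by
    intro g; apply LinearMap.ext; intro x; rw [smul_def]; rfl
  have hpfix : p ∣ Nat.card (MulAction.fixedPoints G D) :=
    (Nat.modEq_zero_iff_dvd.mp ((hmod.symm.trans (Nat.modEq_zero_iff_dvd.mpr hpD))))
  have hfix_pos : 0 < Nat.card (MulAction.fixedPoints G D) := Nat.card_pos_iff.mpr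
    ⟨⟨⟨0, hzero_fixed⟩⟩, Set.finite_coe_iff.mpr (Set.toFinite _)⟩
  have hfix_big : 1 < Nat.card (MulAction.fixedPoints G D) :=
    lt_of_lt_of_le (Fact.out : p.Prime).one_lt (Nat.le_of_dvd hfix_pos hpfix)
  haveI : Nontrivial (MulAction.fixedPoints G D) :=
    Finite.one_lt_card_iff_nontrivial.mp hfix_big
  obtain ⟨l', hl'⟩ := exists_ne (⟨0, hzero_fixed⟩ : MulAction.fixedPoints G D)
  have hlne : (l' : D) ≠ 0 := fun h => hl' (Subtype.ext h)
  have hlfix : ∀ g : G, g • (l' : D) = l' := l'.2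
  -- extend l' to Ab
  obtain ⟨L, hL⟩ := LinearMap.exists_extend (l' : D)
  -- invariance kills the generators
  have hker : SSet V ⊆ (LinearMap.ker L : Set Ab) := by
    rintro y ⟨g, w, hw, rfl⟩
    have h1 : L ((MonoidAlgebra.single g (1:ZMod p)) * w) = (l' : D) ⟨w, hw⟩ := by
      have := congrArg (fun (f : V →ₗ[ZMod p] ZMod p) => f ⟨w, hw⟩) (hlfix g⁻¹)
      rw [smul_def] at this
      simp only [inv_inv] at this
      have hcoe : L ((MonoidAlgebra.single g (1:ZMod p)) * w)
          = (l' : D) ⟨(MonoidAlgebra.single g (1:ZMod p)) * w, hmu g ⟨w, hw⟩⟩ := by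
        have := congrArg (fun (f : V →ₗ[ZMod p] ZMod p) =>
          f ⟨(MonoidAlgebra.single g (1:ZMod p)) * w, hmu g ⟨w, hw⟩⟩) hL
        simpa using this
      rw [hcoe, this]
    have h2 : L w = (l' : D) ⟨w, hw⟩ := by
      have := congrArg (fun (f : V →ₗ[ZMod p] ZMod p) => f ⟨w, hw⟩) hL
      simpa using this
    simp only [SetLike.mem_coe, LinearMap.mem_ker, sub_mul, one_mul, map_sub, h1, h2, sub_self]
  -- hence l' = 0, contradiction
  apply hlne
  apply LinearMap.ext
  intro x
  have hxk : (x : Ab) ∈ LinearMap.ker L := by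
    have := hsub x.2
    have hspan : Submodule.span (ZMod p) (SSet V) ≤ LinearMap.ker L :=
      Submodule.span_le.mpr hker
    exact hspan this
  have := congrArg (fun (f : V →ₗ[ZMod p] ZMod p) => f x) hL
  rw [← this]
  simpa using hxk


def epsb (a : Ab) : ZMod p := ∑ h : G, a.coeff h

lemma decomp (b w : Ab) :
    b * w = (∑ h : G, (b.coeff h) • ((MonoidAlgebra.single h (1 : ZMod p) - 1) * w))
      + (epsb b) • w := by
  conv_lhs => rw [← (Finsupp.sum_fintype b.coeff MonoidAlgebra.single (by simp)).symm.trans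
    (MonoidAlgebra.sum_coeff_single b)]
  rw [Finset.sum_mul]
  have h1 : ∀ h : G, (MonoidAlgebra.single h (b.coeff h)) * w
      = (b.coeff h) • ((MonoidAlgebra.single h (1 : ZMod p) - 1) * w) + (b.coeff h) • w := by
    intro h
    have : (MonoidAlgebra.single h (b.coeff h)) = (b.coeff h) • MonoidAlgebra.single h (1 : ZMod p) := by
      rw [MonoidAlgebra.smul_single, smul_eq_mul, mul_one]
    rw [this, smul_mul_assoc, sub_mul, one_mul, smul_sub]
    abel
  rw [Finset.sum_congr rfl (fun h _ => h1 h), Finset.sum_add_distrib, epsb, Finset.sum_smul]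

lemma core_mem (V : Submodule (ZMod p) Ab) (b w : Ab) (hb : epsb b = 0) (hw : w ∈ V) :
    b * w ∈ Submodule.span (ZMod p) (SSet V) := by
  rw [decomp, hb, zero_smul, add_zero]
  exact Submodule.sum_mem _ fun h _ =>
    Submodule.smul_mem _ _ (Submodule.subset_span ⟨h, w, hw, rfl⟩)

lemma Wc_bot (hG : IsPGroup p G) :
    Wc (p := p) (G := G) (Module.finrank (ZMod p) Ab + 1) = ⊥ := by
  haveI : FiniteDimensional (ZMod p) Ab :=
    inferInstance
  set d := Module.finrank (ZMod p) Ab with hd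
  have claim : ∀ k, Wc (p := p) (G := G) k ≠ ⊥ → Module.finrank (ZMod p) (Wc (p := p) (G := G) k) + k ≤ d := by
    intro k
    induction k with
    | zero =>
      intro _
      simp only [Wc, Nat.add_zero]
      exact (finrank_top (ZMod p) Ab).le
    | succ k ih =>
      intro h1
      have hk : Wc (p := p) (G := G) k ≠ ⊥ := by
        intro hbot
        apply h1
        have := Wc_succ_le (p := p) (G := G) k
        rw [hbot, le_bot_iff] at this
        exact this
      have hlt : Wc (p := p) (G := G) (k+1) < Wc (p := p) (G := G) k := by
        rcases (Wc_succ_le (p := p) (G := G) k).lt_or_eq with h | h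
        · exact h
        · exact absurd (dual_lemma hG (Wc k) hk (gstable_Wc k) (by show Wc (p := p) (G := G) k ≤ Wc (p := p) (G := G) (k+1); exact h.ge)) id
      have hfr : Module.finrank (ZMod p) (Wc (p := p) (G := G) (k+1))
          < Module.finrank (ZMod p) (Wc (p := p) (G := G) k) :=
        Submodule.finrank_lt_finrank_of_lt hlt
      have := ih hk
      omega
  by_contra hne
  have := claim _ hne
  omega

lemma prod_mem_Wc (l : List Ab) (hl : ∀ x ∈ l, epsb x = 0) :
    l.prod ∈ Wc (p := p) (G := G) l.length := by
  induction l with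
  | nil => simp [Wc]
  | cons x l ih =>
    rw [List.prod_cons, List.length_cons]
    exact core_mem _ _ _ (hl x List.mem_cons_self)
      (ih fun y hy => hl y (List.mem_cons_of_mem _ hy))

lemma nilpotent_prod (hG : IsPGroup p G) (l : List Ab)
    (hlen : l.length = Module.finrank (ZMod p) Ab + 1)
    (hl : ∀ x ∈ l, epsb x = 0) : l.prod = 0 := by
  have := prod_mem_Wc l hl
  rw [hlen, Wc_bot hG] at this
  simpa using this

lemma nilpotent_pow (hG : IsPGroup p G) (x : Ab) (hx : epsb x = 0) :
    x ^ (Module.finrank (ZMod p) Ab + 1) = 0 := by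
  have := nilpotent_prod hG (List.replicate (Module.finrank (ZMod p) Ab + 1) x)
    (by simp) (fun y hy => by rw [List.eq_of_mem_replicate hy]; exact hx)
  rwa [List.prod_replicate] at this


/-! ### The `ℤ_p[G]` side -/

local notation "Rg" => MonoidAlgebra ℤ_[p] G

instance : Module.Finite ℤ_[p] Rg :=
  inferInstance

def epsZ (a : Rg) : ℤ_[p] := ∑ h : G, a.coeff h

lemma epsZ_add (a b : Rg) : epsZ (a + b) = epsZ a + epsZ b := by
  rw [epsZ, epsZ, epsZ, ← Finset.sum_add_distrib]
  exact Finset.sum_congr rfl fun h _ => Finsupp.add_apply a.coeff b.coeff h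

lemma epsZ_sub (a b : Rg) : epsZ (a - b) = epsZ a - epsZ b := by
  rw [epsZ, epsZ, epsZ, ← Finset.sum_sub_distrib]
  exact Finset.sum_congr rfl fun h _ => Finsupp.sub_apply a.coeff b.coeff h

lemma epsZ_neg (a : Rg) : epsZ (-a) = - epsZ a := by
  rw [epsZ, epsZ, ← Finset.sum_neg_distrib]
  exact Finset.sum_congr rfl fun h _ => Finsupp.neg_apply a.coeff h

lemma epsZ_smul (c : ℤ_[p]) (a : Rg) : epsZ (c • a) = c * epsZ a := by
  rw [epsZ, epsZ, Finset.mul_sum]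
  exact Finset.sum_congr rfl fun h _ => Finsupp.smul_apply c a.coeff h

lemma epsZ_one : epsZ (1 : Rg) = 1 := by
  rw [epsZ, MonoidAlgebra.one_def, Finset.sum_eq_single (1 : G)]
  · simp
  · intro b _ hb; exact Finsupp.single_eq_of_ne' (Ne.symm hb)
  · intro h; exact absurd (Finset.mem_univ _) h

def piBar : Rg →+* Ab :=
  MonoidAlgebra.liftNCRingHom
    ((MonoidAlgebra.singleOneRingHom).comp (PadicInt.toZMod (p := p)))
    (MonoidAlgebra.of (ZMod p) G)
    (fun x y => by
      show MonoidAlgebra.single (1:G) (PadicInt.toZMod x) * MonoidAlgebra.single y (1:ZMod p)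
        = MonoidAlgebra.single y (1:ZMod p) * MonoidAlgebra.single (1:G) (PadicInt.toZMod x)
      rw [MonoidAlgebra.single_mul_single, MonoidAlgebra.single_mul_single,
        one_mul, mul_one, one_mul, mul_one])

lemma piBar_single (g : G) (c : ℤ_[p]) :
    piBar (MonoidAlgebra.single g c) = MonoidAlgebra.single g (PadicInt.toZMod c) := by
  rw [piBar, MonoidAlgebra.liftNCRingHom]
  show MonoidAlgebra.liftNC _ _ (MonoidAlgebra.single g c) = _
  rw [MonoidAlgebra.liftNC_single]
  simp [MonoidAlgebra.singleOneRingHom, MonoidAlgebra.of_apply,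
    MonoidAlgebra.single_mul_single]

lemma piBar_apply (a : Rg) (h : G) : (piBar a).coeff h = PadicInt.toZMod (a.coeff h) := by
  induction a using MonoidAlgebra.induction_linear with
  | zero => simp
  | add f g hf hg =>
    rw [map_add, MonoidAlgebra.coeff_add, Finsupp.add_apply, hf, hg, MonoidAlgebra.coeff_add,
      Finsupp.add_apply, map_add]
  | single g c =>
    rw [piBar_single]
    rcases eq_or_ne g h with rfl | hgh
    · simp [MonoidAlgebra.coeff_single, Finsupp.single_apply]
    · simp [MonoidAlgebra.coeff_single, Finsupp.single_apply, hgh]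

lemma epsb_piBar (a : Rg) : epsb (piBar a) = PadicInt.toZMod (epsZ a) := by
  simp only [epsb, epsZ, piBar_apply, map_sum]

lemma ker_piBar (b : Rg) (hb : piBar b = 0) : ∃ w : Rg, b = (p : ℤ_[p]) • w := by
  have hp0 : (p : ℤ_[p]) ≠ 0 := Nat.cast_ne_zero.mpr (Fact.out : p.Prime).pos.ne'
  have hdvd : ∀ h : G, (p : ℤ_[p]) ∣ b.coeff h := by
    intro h
    have h1 : PadicInt.toZMod (b.coeff h) = 0 := by rw [← piBar_apply, hb]; rfl
    have h2 : b.coeff h ∈ RingHom.ker (PadicInt.toZMod (p := p)) := h1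
    rw [PadicInt.ker_toZMod, PadicInt.maximalIdeal_eq_span_p, Ideal.mem_span_singleton] at h2
    exact h2
  classical
  refine ⟨MonoidAlgebra.ofCoeff (Finsupp.mapRange (fun c => if hc : (p : ℤ_[p]) ∣ c then hc.choose else 0) ?_ b.coeff), ?_⟩
  · show (if hc : (p : ℤ_[p]) ∣ (0 : ℤ_[p]) then hc.choose else 0) = 0
    rw [dif_pos (dvd_zero _)]
    have := (dvd_zero ((p : ℤ_[p]))).choose_spec
    exact ((mul_eq_zero.mp this.symm).resolve_left hp0)
  · ext h
    rw [MonoidAlgebra.coeff_smul_apply, MonoidAlgebra.coeff_ofCoeff, Finsupp.mapRange_apply, dif_pos (hdvd h), smul_eq_mul]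
    exact (hdvd h).choose_spec

lemma isUnit_one_add_psmul (w : Rg) : IsUnit (1 + (p : ℤ_[p]) • w) := by
  set a : Rg := 1 + (p : ℤ_[p]) • w with ha
  have hjac : Ideal.span {(p : ℤ_[p])} ≤ Ideal.jacobson ⊥ := by
    rw [IsLocalRing.jacobson_eq_maximalIdeal ⊥ bot_ne_top, ← PadicInt.maximalIdeal_eq_span_p]
  have hFG : (⊤ : Submodule ℤ_[p] Rg).FG := Module.Finite.fg_top (R := ℤ_[p]) (M := MonoidAlgebra ℤ_[p] G)
  have hL : ∀ z : Rg, a * z = z + (p : ℤ_[p]) • (w * z) := by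
    intro z; rw [ha, add_mul, one_mul, smul_mul_assoc]
  have hR : ∀ z : Rg, z * a = z + (p : ℤ_[p]) • (z * w) := by
    intro z; rw [ha, mul_add, mul_one, mul_smul_comm]
  have hsurjL : ∃ y : Rg, a * y = 1 := by
    have key : (⊤ : Submodule ℤ_[p] Rg) ≤ LinearMap.range (LinearMap.mulLeft ℤ_[p] a) := by
      apply Submodule.le_of_le_smul_of_le_jacobson_bot hFG hjac
      intro z _
      have : z = a * z - (p : ℤ_[p]) • (w * z) := by rw [hL]; abel
      rw [this]
      exact Submodule.sub_mem _
        (Submodule.mem_sup_left ⟨z, rfl⟩)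
        (Submodule.mem_sup_right
          (Submodule.smul_mem_smul (Ideal.mem_span_singleton_self _) Submodule.mem_top))
    obtain ⟨y, hy⟩ := key Submodule.mem_top
    exact ⟨y, hy⟩
  have hsurjR : ∃ y : Rg, y * a = 1 := by
    have key : (⊤ : Submodule ℤ_[p] Rg) ≤ LinearMap.range (LinearMap.mulRight ℤ_[p] a) := by
      apply Submodule.le_of_le_smul_of_le_jacobson_bot hFG hjac
      intro z _
      have : z = z * a - (p : ℤ_[p]) • (z * w) := by rw [hR]; abel
      rw [this]
      exact Submodule.sub_mem _
        (Submodule.mem_sup_left ⟨z, rfl⟩)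
        (Submodule.mem_sup_right
          (Submodule.smul_mem_smul (Ideal.mem_span_singleton_self _) Submodule.mem_top))
    obtain ⟨y, hy⟩ := key Submodule.mem_top
    exact ⟨y, hy⟩
  obtain ⟨y, hy⟩ := hsurjL
  obtain ⟨y', hy'⟩ := hsurjR
  have hyy : y' = y := by rw [← one_mul y, ← hy', mul_assoc, hy, mul_one]
  exact ⟨⟨a, y, hy, by rw [← hyy]; exact hy'⟩, rfl⟩

lemma isUnit_one_add_aug (hG : IsPGroup p G) (j : Rg)
    (hj : PadicInt.toZMod (epsZ j) = 0) : IsUnit (1 + j) := by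
  set T := Module.finrank (ZMod p) Ab + 1 with hT
  set x : Rg := -j with hx
  set y₀ : Rg := ∑ i ∈ Finset.range T, x ^ i with hy₀
  have hgeo : y₀ * (1 + j) = 1 - x ^ T := by
    have h1 := geom_sum_mul x T
    have : x - 1 = -(1 + j) := by rw [hx]; abel
    rw [this, mul_neg] at h1
    have := congrArg (fun z => -z) h1
    simp only [neg_neg, neg_sub] at this
    exact this
  have hxT : ∃ w : Rg, x ^ T = (p : ℤ_[p]) • w := by
    apply ker_piBar
    rw [map_pow]
    exact nilpotent_pow hG (piBar x)
      (by rw [epsb_piBar, hx, epsZ_neg, map_neg, hj, neg_zero])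
  obtain ⟨w, hw⟩ := hxT
  have hunit : IsUnit (1 - x ^ T) := by
    rw [hw, sub_eq_add_neg, ← smul_neg]
    exact isUnit_one_add_psmul _
  have hcomm : Commute (1 + j) y₀ := by
    apply Commute.sum_right
    intro i _
    exact (((Commute.one_left j).add_left (Commute.refl j)).neg_right.pow_right i)
  rw [← hcomm.eq] at hgeo
  rw [← hgeo] at hunit
  exact (hcomm.isUnit_mul_iff.mp hunit).1

lemma isUnit_of_eps_ne (hG : IsPGroup p G) (a : Rg)
    (ha : PadicInt.toZMod (epsZ a) ≠ 0) : IsUnit a := by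
  set c := epsZ a with hc
  have hcu : IsUnit c := by
    by_contra hnc
    have : c ∈ IsLocalRing.maximalIdeal ℤ_[p] := hnc
    rw [← PadicInt.ker_toZMod] at this
    exact ha this
  set b : Rg := ((hcu.unit⁻¹ : ℤ_[p]ˣ) : ℤ_[p]) • (a - c • (1 : Rg)) with hb
  have hbe : PadicInt.toZMod (epsZ b) = 0 := by
    rw [hb, epsZ_smul, epsZ_sub, epsZ_smul, epsZ_one, mul_one, ← hc, sub_self, mul_zero, map_zero]
  have key : a = c • (1 + b) := by
    rw [hb, smul_add, smul_smul]
    rw [IsUnit.mul_val_inv hcu, one_smul]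
    abel
  rw [key, Algebra.smul_def]
  exact ((hcu.map (algebraMap ℤ_[p] (MonoidAlgebra ℤ_[p] G)))).mul (isUnit_one_add_aug hG b hbe)


/-! ### Step I: M is projective over ℤ_p[G] -/

section Transfer

variable {M : Type*} [AddCommGroup M] [Module (MonoidAlgebra ℤ_[p] G) M]
  [Module ℤ_[p] M] [IsScalarTower ℤ_[p] (MonoidAlgebra ℤ_[p] G) M]

lemma projective_of_zp_split (hMproj : Module.Projective ℤ_[p] M)
    (n : ℕ) (g : (Fin n → Rg) →ₗ[MonoidAlgebra ℤ_[p] G] M) (hg : Function.Surjective g)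
    (hK : Module.Projective (MonoidAlgebra ℤ_[p] G) (LinearMap.ker g)) :
    Module.Projective (MonoidAlgebra ℤ_[p] G) M := by
  classical
  set K := LinearMap.ker g with hKdef
  obtain ⟨s, hs⟩ := hK.out
  obtain ⟨σ, hσ⟩ := Module.projective_lifting_property
    (g.restrictScalars ℤ_[p]) (LinearMap.id) hg
  have hσ' : ∀ m : M, g (σ m) = m := fun m => DFunLike.congr_fun hσ m
  -- the ℤ_p-linear retraction onto K
  have memK : ∀ y : Fin n → Rg, y - σ (g y) ∈ K := by
    intro y
    simp only [hKdef, LinearMap.mem_ker, map_sub, hσ', sub_self]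
  let q : (Fin n → Rg) → K := fun y => ⟨y - σ (g y), memK y⟩
  have hq_add : ∀ y z, q (y + z) = q y + q z := by
    intro y z
    apply Subtype.ext
    show (y + z) - σ (g (y + z)) = (y - σ (g y)) + (z - σ (g z))
    rw [map_add, map_add]
    abel
  have hq_smulZ : ∀ (c : ℤ_[p]) y, q (c • y) = c • q y := by
    intro c y
    apply Subtype.ext
    show (c • y) - σ (g (c • y)) = c • (y - σ (g y))
    rw [LinearMap.map_smul_of_tower, map_smul, smul_sub]
  have hq_K : ∀ x : K, q (x : Fin n → Rg) = x := by
    intro x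
    apply Subtype.ext
    show (x : Fin n → Rg) - σ (g x) = x
    have : g (x : Fin n → Rg) = 0 := x.2
    rw [this, map_zero, sub_zero]
  -- the coefficient-extraction map
  let π₁ : Rg →ₗ[ℤ_[p]] Rg :=
    { toFun := fun r => MonoidAlgebra.single 1 (r.coeff 1)
      map_add' := fun a b => by
        show MonoidAlgebra.single (1:G) ((a + b).coeff (1:G))
          = MonoidAlgebra.single (1:G) (a.coeff 1) + MonoidAlgebra.single (1:G) (b.coeff 1)
        rw [MonoidAlgebra.coeff_add, Finsupp.add_apply]
        exact MonoidAlgebra.single_add 1 (a.coeff 1) (b.coeff 1)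
      map_smul' := fun c a => by
        show MonoidAlgebra.single (1:G) ((c • a).coeff (1:G))
          = c • MonoidAlgebra.single (1:G) (a.coeff 1)
        rw [MonoidAlgebra.coeff_smul_apply]
        exact (MonoidAlgebra.smul_single c 1 (a.coeff 1)).symm }
  let E : (K →₀ Rg) →ₗ[ℤ_[p]] (K →₀ Rg) := Finsupp.mapRange.linearMap π₁
  have hE : ∀ (f : K →₀ Rg) (j : K), E f j = MonoidAlgebra.single 1 ((f j).coeff 1) := by
    intro f j
    simp only [E, Finsupp.mapRange.linearMap_apply, Finsupp.mapRange_apply]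
    rfl
  -- the transfer map
  let F : (Fin n → Rg) → (K →₀ Rg) := fun y =>
    ∑ h : G, (MonoidAlgebra.single h (1:ℤ_[p]) : Rg) •
      (E (s (q ((MonoidAlgebra.single h⁻¹ (1:ℤ_[p]) : Rg) • y))))
  have hF_add : ∀ y z, F (y + z) = F y + F z := by
    intro y z
    rw [← Finset.sum_add_distrib]
    refine Finset.sum_congr rfl fun h _ => ?_
    rw [smul_add, hq_add, map_add, map_add, smul_add]
  have hF_zero : F 0 = 0 := by
    refine Finset.sum_eq_zero fun h _ => ?_
    have : q ((MonoidAlgebra.single h⁻¹ (1:ℤ_[p]) : Rg) • (0 : Fin n → Rg)) = 0 := by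
      rw [smul_zero]
      apply Subtype.ext
      show (0 : Fin n → Rg) - σ (g 0) = 0
      rw [map_zero, map_zero, sub_zero]
    rw [this, map_zero, map_zero, smul_zero]
  have hF_sZ : ∀ (c : ℤ_[p]) y, F (c • y) = c • F y := by
    intro c y
    rw [Finset.smul_sum]
    refine Finset.sum_congr rfl fun h _ => ?_
    rw [smul_comm ((MonoidAlgebra.single h⁻¹ (1:ℤ_[p])) : Rg) c y, hq_smulZ,
      LinearMap.map_smul_of_tower, map_smul,
      smul_comm ((MonoidAlgebra.single h (1:ℤ_[p])) : Rg) c]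
  have hF_single : ∀ (u : G) y,
      F ((MonoidAlgebra.single u (1:ℤ_[p]) : Rg) • y)
        = (MonoidAlgebra.single u (1:ℤ_[p]) : Rg) • F y := by
    intro u y
    rw [Finset.smul_sum]
    refine Fintype.sum_equiv (Equiv.mulLeft u⁻¹) _ _ fun h => ?_
    simp only [Equiv.coe_mulLeft]
    have h1 : (MonoidAlgebra.single h⁻¹ (1:ℤ_[p]) : Rg) •
        ((MonoidAlgebra.single u (1:ℤ_[p]) : Rg) • y)
        = (MonoidAlgebra.single (u⁻¹ * h)⁻¹ (1:ℤ_[p]) : Rg) • y := by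
      rw [← mul_smul, MonoidAlgebra.single_mul_single, mul_one]
      congr 2
      rw [mul_inv_rev, inv_inv]
    have h2 : ∀ Z : (K →₀ Rg), (MonoidAlgebra.single u (1:ℤ_[p]) : Rg) •
        ((MonoidAlgebra.single (u⁻¹ * h) (1:ℤ_[p]) : Rg) • Z)
        = (MonoidAlgebra.single h (1:ℤ_[p]) : Rg) • Z := by
      intro Z
      rw [← mul_smul, MonoidAlgebra.single_mul_single, mul_one, mul_inv_cancel_left]
    rw [h1, h2]
  have hFR : ∀ (r : Rg) y, F (r • y) = r • F y := by
    intro r y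
    induction r using MonoidAlgebra.induction_linear with
    | zero => rw [zero_smul, zero_smul, hF_zero]
    | add f f' hf hf' => rw [add_smul, hF_add, hf, hf', add_smul]
    | single u c =>
      show F ((MonoidAlgebra.single u c : Rg) • y) = (MonoidAlgebra.single u c : Rg) • F y
      have hsc : (MonoidAlgebra.single u c : Rg) = c • MonoidAlgebra.single u (1:ℤ_[p]) := by
        rw [MonoidAlgebra.smul_single, smul_eq_mul, mul_one]
      rw [hsc, smul_assoc, hF_sZ, hF_single, smul_assoc]
  -- the reconstruction identity
  have hRecon : ∀ f : K →₀ Rg,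
      (∑ h : G, (MonoidAlgebra.single h (1:ℤ_[p]) : Rg) •
        (E ((MonoidAlgebra.single h⁻¹ (1:ℤ_[p]) : Rg) • f))) = f := by
    intro f
    refine Finsupp.ext fun j => ?_
    rw [Finsupp.finset_sum_apply]
    have hterm : ∀ h : G, ((MonoidAlgebra.single h (1:ℤ_[p]) : Rg) •
        (E ((MonoidAlgebra.single h⁻¹ (1:ℤ_[p]) : Rg) • f))) j
        = MonoidAlgebra.single h ((f j).coeff h) := by
      intro h
      have e0 : ((MonoidAlgebra.single h⁻¹ (1:ℤ_[p]) : Rg) • f) j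
          = (MonoidAlgebra.single h⁻¹ (1:ℤ_[p]) : Rg) * f j := rfl
      have e1 : (E ((MonoidAlgebra.single h⁻¹ (1:ℤ_[p]) : Rg) • f)) j
          = MonoidAlgebra.single 1 (((MonoidAlgebra.single h⁻¹ (1:ℤ_[p]) : Rg) * f j).coeff 1) := by
        rw [hE, e0]
      have e2 : ((MonoidAlgebra.single h (1:ℤ_[p]) : Rg) •
          (E ((MonoidAlgebra.single h⁻¹ (1:ℤ_[p]) : Rg) • f))) j
          = (MonoidAlgebra.single h (1:ℤ_[p]) : Rg)
            * (E ((MonoidAlgebra.single h⁻¹ (1:ℤ_[p]) : Rg) • f)) j := rfl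
      rw [e2, e1, MonoidAlgebra.coeff_single_mul_apply, MonoidAlgebra.single_mul_single]
      simp
    rw [Finset.sum_congr rfl fun h _ => hterm h]
    exact (Finsupp.sum_fintype (f j).coeff MonoidAlgebra.single (by simp)).symm.trans
      (MonoidAlgebra.sum_coeff_single (f j))
  have hFι : ∀ x : K, F (x : Fin n → Rg) = s x := by
    intro x
    have h1 : ∀ h : G, q ((MonoidAlgebra.single h⁻¹ (1:ℤ_[p]) : Rg) • (x : Fin n → Rg))
        = (MonoidAlgebra.single h⁻¹ (1:ℤ_[p]) : Rg) • x := by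
      intro h
      rw [← Submodule.coe_smul, hq_K]
    show (∑ h : G, (MonoidAlgebra.single h (1:ℤ_[p]) : Rg) •
      (E (s (q ((MonoidAlgebra.single h⁻¹ (1:ℤ_[p]) : Rg) • (x : Fin n → Rg)))))) = s x
    rw [Finset.sum_congr rfl fun h _ => by rw [h1 h, map_smul]]
    exact hRecon (s x)
  -- bundle the retraction
  let Ψ : (Fin n → Rg) →ₗ[MonoidAlgebra ℤ_[p] G] K :=
    { toFun := fun y => Finsupp.linearCombination (MonoidAlgebra ℤ_[p] G) (id : K → K) (F y)
      map_add' := fun y z => by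
        show Finsupp.linearCombination _ (id : K → K) (F (y + z)) = _
        rw [hF_add, map_add]
      map_smul' := fun r y => by
        show Finsupp.linearCombination _ (id : K → K) (F (r • y)) = _
        rw [hFR, map_smul, RingHom.id_apply] }
  have hΨ : ∀ x : K, Ψ (x : Fin n → Rg) = x := by
    intro x
    show Finsupp.linearCombination _ (id : K → K) (F (x : Fin n → Rg)) = x
    rw [hFι x]
    exact hs x
  -- the Rg-linear splitting of g
  let u0 : M → (Fin n → Rg) := fun m => σ m - (Ψ (σ m) : Fin n → Rg)
  have hu_add : ∀ m m', u0 (m + m') = u0 m + u0 m' := by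
    intro m m'
    show σ (m + m') - (Ψ (σ (m + m')) : Fin n → Rg) = _
    rw [map_add, map_add, Submodule.coe_add]
    show _ = (σ m - (Ψ (σ m) : Fin n → Rg)) + (σ m' - (Ψ (σ m') : Fin n → Rg))
    abel
  have hu_smul : ∀ (r : MonoidAlgebra ℤ_[p] G) m, u0 (r • m) = r • u0 m := by
    intro r m
    have hwK : σ (r • m) - r • σ m ∈ K := by
      simp only [hKdef, LinearMap.mem_ker, map_sub, hσ', LinearMap.map_smul, sub_self]
    have h1 : σ (r • m) = r • σ m + (σ (r • m) - r • σ m) := by abel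
    have h2 : Ψ (σ (r • m)) = r • Ψ (σ m) + ⟨σ (r • m) - r • σ m, hwK⟩ := by
      conv_lhs => rw [h1]
      rw [map_add, map_smul]
      congr 1
      exact hΨ ⟨σ (r • m) - r • σ m, hwK⟩
    show σ (r • m) - (Ψ (σ (r • m)) : Fin n → Rg) = r • (σ m - (Ψ (σ m) : Fin n → Rg))
    rw [h2, Submodule.coe_add, Submodule.coe_smul, smul_sub]
    have h3 : ((⟨σ (r • m) - r • σ m, hwK⟩ : K) : Fin n → Rg) = σ (r • m) - r • σ m := rfl
    rw [h3]
    abel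
  let u : M →ₗ[MonoidAlgebra ℤ_[p] G] (Fin n → Rg) :=
    { toFun := u0
      map_add' := hu_add
      map_smul' := fun r m => by
        show u0 (r • m) = _
        rw [hu_smul, RingHom.id_apply] }
  have hgu : g.comp u = LinearMap.id := by
    apply LinearMap.ext
    intro m
    show g (σ m - (Ψ (σ m) : Fin n → Rg)) = m
    rw [map_sub, hσ']
    have : g ((Ψ (σ m) : Fin n → Rg)) = 0 := (Ψ (σ m)).2
    rw [this, sub_zero]
  exact Module.Projective.of_split u g hgu

end Transfer


/-! ### Step III: fg projective implies free -/

section Final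

variable {M : Type*} [AddCommGroup M] [Module (MonoidAlgebra ℤ_[p] G) M]
  [Module ℤ_[p] M] [IsScalarTower ℤ_[p] (MonoidAlgebra ℤ_[p] G) M]

lemma free_of_projective (hG : IsPGroup p G) [Module.Finite (MonoidAlgebra ℤ_[p] G) M]
    (hProj : Module.Projective (MonoidAlgebra ℤ_[p] G) M) :
    Module.Free (MonoidAlgebra ℤ_[p] G) M := by
  classical
  -- choose a generating set of minimal cardinality
  have hex : ∃ r : ℕ, ∃ S : Finset M, S.card = r ∧
      Submodule.span (MonoidAlgebra ℤ_[p] G) (S : Set M) = ⊤ := by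
    obtain ⟨S, hS⟩ := (Module.Finite.fg_top (R := MonoidAlgebra ℤ_[p] G) (M := M) :
      (⊤ : Submodule (MonoidAlgebra ℤ_[p] G) M).FG)
    exact ⟨S.card, S, rfl, hS⟩
  obtain ⟨S, hcard, hspan⟩ := Nat.find_spec hex
  have hmin : ∀ m, m < Nat.find hex → ¬ ∃ S' : Finset M, S'.card = m ∧
      Submodule.span (MonoidAlgebra ℤ_[p] G) (S' : Set M) = ⊤ :=
    fun m hm => Nat.find_min hex hm
  set α := {y : M // y ∈ S} with hα
  -- the canonical surjection
  let φ : (α → Rg) →ₗ[MonoidAlgebra ℤ_[p] G] M :=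
    { toFun := fun c => ∑ a : α, c a • (a : M)
      map_add' := fun c d => by
        simp only [Pi.add_apply, add_smul]
        rw [Finset.sum_add_distrib]
      map_smul' := fun t c => by
        simp only [Pi.smul_apply, smul_eq_mul, RingHom.id_apply, mul_smul]
        rw [Finset.smul_sum] }
  have hφ_single : ∀ a : α, φ (Pi.single a (1 : Rg)) = (a : M) := by
    intro a
    show (∑ b : α, (Pi.single a (1 : Rg) : α → Rg) b • (b : M)) = (a : M)
    rw [Finset.sum_eq_single a]
    · rw [Pi.single_eq_same, one_smul]
    · intro b _ hb
      rw [Pi.single_eq_of_ne hb, zero_smul]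
    · intro h; exact absurd (Finset.mem_univ _) h
  have hφsurj : Function.Surjective φ := by
    rw [← LinearMap.range_eq_top, eq_top_iff, ← hspan, Submodule.span_le]
    intro y hy
    exact ⟨Pi.single (⟨y, hy⟩ : α) 1, hφ_single _⟩
  -- the components of kernel elements are non-units
  have hcomp : ∀ z ∈ LinearMap.ker φ, ∀ a : α, PadicInt.toZMod (epsZ (z a)) = 0 := by
    intro z hz a₀
    by_contra hne
    have hu := isUnit_of_eps_ne hG (z a₀) hne
    have hzero : ∑ a : α, z a • (a : M) = 0 := hz
    -- remove a₀ from the generating set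
    have hsum : z a₀ • (a₀ : M) = - ∑ a ∈ Finset.univ.erase a₀, z a • (a : M) := by
      have h4 := Finset.add_sum_erase Finset.univ (fun a : α => z a • (a : M))
        (Finset.mem_univ a₀)
      rw [eq_neg_iff_add_eq_zero, h4]
      exact hzero
    have hmem : (a₀ : M) ∈ Submodule.span (MonoidAlgebra ℤ_[p] G)
        ((S.erase (a₀ : M)) : Set M) := by
      have hx2 : (a₀ : M) = ((hu.unit⁻¹ : (MonoidAlgebra ℤ_[p] G)ˣ) : Rg) •
          (z a₀ • (a₀ : M)) := by
        rw [smul_smul, IsUnit.val_inv_mul, one_smul]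
      rw [hsum, smul_neg] at hx2
      have h3 : -(((hu.unit⁻¹ : (MonoidAlgebra ℤ_[p] G)ˣ) : Rg) •
          ∑ a ∈ Finset.univ.erase a₀, z a • (a : M)) ∈
          Submodule.span (MonoidAlgebra ℤ_[p] G) ((S.erase (a₀ : M)) : Set M) := by
        refine neg_mem (Submodule.smul_mem _ _ (Submodule.sum_mem _ fun b hb => ?_))
        refine Submodule.smul_mem _ _ (Submodule.subset_span ?_)
        have hba : b ≠ a₀ := Finset.ne_of_mem_erase hb
        have : (b : M) ≠ (a₀ : M) := fun h => hba (Subtype.ext h)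
        exact Finset.mem_coe.mpr (Finset.mem_erase.mpr ⟨this, b.2⟩)
      rwa [← hx2] at h3
    have hspan' : Submodule.span (MonoidAlgebra ℤ_[p] G)
        ((S.erase (a₀ : M)) : Set M) = ⊤ := by
      rw [eq_top_iff, ← hspan, Submodule.span_le]
      intro y hy
      rcases eq_or_ne y (a₀ : M) with rfl | hne'
      · exact hmem
      · exact Submodule.subset_span (Finset.mem_coe.mpr
          (Finset.mem_erase.mpr ⟨hne', hy⟩))
    have hlt : S.card - 1 < Nat.find hex := by
      have hpos : 0 < S.card := Finset.card_pos.mpr ⟨(a₀ : M), a₀.2⟩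
      omega
    exact hmin _ hlt ⟨S.erase (a₀ : M), by rw [Finset.card_erase_of_mem a₀.2], hspan'⟩
  -- splitting
  obtain ⟨sφ, hsφ⟩ := Module.projective_lifting_property φ LinearMap.id hφsurj
  have hsφ' : ∀ m : M, φ (sφ m) = m := fun m => DFunLike.congr_fun hsφ m
  let π : (α → Rg) →ₗ[MonoidAlgebra ℤ_[p] G] (α → Rg) := LinearMap.id - sφ ∘ₗ φ
  have hπ_ker : ∀ y, π y ∈ LinearMap.ker φ := by
    intro y
    simp only [π, LinearMap.mem_ker, LinearMap.sub_apply, LinearMap.id_apply,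
      LinearMap.comp_apply, map_sub, hsφ', sub_self]
  have hπ_id : ∀ z ∈ LinearMap.ker φ, π z = z := by
    intro z hz
    simp only [π, LinearMap.sub_apply, LinearMap.id_apply, LinearMap.comp_apply]
    rw [LinearMap.mem_ker.mp hz, map_zero, sub_zero]
  -- decomposition of kernel elements
  have hdec : ∀ z ∈ LinearMap.ker φ,
      z = ∑ a : α, (z a) • (π ((Pi.single a (1 : Rg) : α → Rg))) := by
    intro z hz
    conv_lhs => rw [← hπ_id z hz, ← Finset.univ_sum_single z, map_sum]
    refine Finset.sum_congr rfl fun a _ => ?_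
    have h5 : (Pi.single a (z a) : α → Rg) = (z a) • (Pi.single a (1 : Rg) : α → Rg) := by
      rw [← Pi.single_smul, smul_eq_mul, mul_one]
    rw [h5, map_smul]
  -- the filtration sets
  let T : ℕ → Set (α → Rg) := fun k =>
    {v | ∃ l : List Rg, l.length = k ∧ (∀ m ∈ l, PadicInt.toZMod (epsZ m) = 0) ∧
      ∃ w ∈ LinearMap.ker φ, v = l.prod • w}
  have hDT : ∀ k, ∀ z ∈ LinearMap.ker φ, z ∈ Submodule.span ℤ_[p] (T k) := by
    intro k
    induction k with
    | zero =>
      intro z hz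
      exact Submodule.subset_span ⟨[], rfl, by simp, z, hz, by simp⟩
    | succ k ih =>
      intro z hz
      have hTsub : T k ⊆ (Submodule.span ℤ_[p] (T (k+1)) : Set (α → Rg)) := by
        rintro v ⟨l, hlen, hl, w, hw, rfl⟩
        rw [hdec w hw, Finset.smul_sum]
        refine Submodule.sum_mem _ fun a _ => ?_
        have : l.prod • ((w a) • (π ((Pi.single a (1 : Rg) : α → Rg))))
            = (l ++ [w a]).prod • (π ((Pi.single a (1 : Rg) : α → Rg))) := by
          rw [List.prod_append, List.prod_singleton, mul_smul]
        rw [this]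
        refine Submodule.subset_span ⟨l ++ [w a], by simp [hlen], ?_, _, hπ_ker _, rfl⟩
        intro m hm
        rcases List.mem_append.mp hm with h | h
        · exact hl m h
        · rw [List.mem_singleton.mp h]
          exact hcomp w hw a
      have := ih z hz
      have h2 : Submodule.span ℤ_[p] (T k) ≤ Submodule.span ℤ_[p] (T (k+1)) :=
        Submodule.span_le.mpr hTsub
      exact h2 this
  -- kernel is contained in p · kernel
  have hfinal : (LinearMap.ker φ).restrictScalars ℤ_[p] ≤
      Ideal.span {(p : ℤ_[p])} • ((LinearMap.ker φ).restrictScalars ℤ_[p]) := by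
    intro z hz
    have h1 := hDT (Module.finrank (ZMod p) Ab + 1) z hz
    refine Submodule.span_le.mpr ?_ h1
    rintro v ⟨l, hlen, hl, w, hw, rfl⟩
    have hprod : piBar l.prod = 0 := by
      rw [map_list_prod]
      refine nilpotent_prod hG _ (by simp [hlen]) ?_
      intro x hx
      obtain ⟨m, hm, rfl⟩ := List.mem_map.mp hx
      rw [epsb_piBar]
      exact hl m hm
    obtain ⟨b, hb⟩ := ker_piBar _ hprod
    rw [hb, smul_assoc]
    exact Submodule.smul_mem_smul (Ideal.mem_span_singleton_self _)
      ((LinearMap.ker φ).smul_mem b hw)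
  -- Nakayama
  have hjac : Ideal.span {(p : ℤ_[p])} ≤ Ideal.jacobson ⊥ := by
    rw [IsLocalRing.jacobson_eq_maximalIdeal ⊥ bot_ne_top, ← PadicInt.maximalIdeal_eq_span_p]
  haveI : IsNoetherian ℤ_[p] (α → Rg) := inferInstance
  have hFG : ((LinearMap.ker φ).restrictScalars ℤ_[p]).FG :=
    IsNoetherian.noetherian _
  have hbot := Submodule.eq_bot_of_le_smul_of_le_jacobson_bot
    (Ideal.span {(p : ℤ_[p])}) ((LinearMap.ker φ).restrictScalars ℤ_[p]) hFG hfinal hjac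
  have hinj : Function.Injective φ := by
    rw [← LinearMap.ker_eq_bot]
    rw [eq_bot_iff]
    intro z hz
    have : z ∈ (LinearMap.ker φ).restrictScalars ℤ_[p] := hz
    rw [hbot] at this
    exact this
  exact Module.Free.of_equiv (LinearEquiv.ofBijective φ ⟨hinj, hφsurj⟩)

end Final

end PadicFreeAux
end


/-- `M` has projective dimension at most 1 over `R`: it admits a length-one
projective resolution, i.e. some surjection from a finite free module has
projective kernel. -/
def ProjDimLEOne (R : Type*) [Ring R] (M : Type*) [AddCommGroup M] [Module R M] : Prop :=
  ∃ (n : ℕ) (g : (Fin n → R) →ₗ[R] M),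
    Function.Surjective g ∧ Module.Projective R (LinearMap.ker g)

/-- Let `p` be a prime, `G` a finite `p`-group, and `M` a finitely
generated module over `ℤ_p[G]` which is free of finite rank as a `ℤ_p`-module.
If `M` has projective dimension at most 1 over `ℤ_p[G]`, then `M` is a free
`ℤ_p[G]`-module. -/
theorem free_of_projDimLEOne_padic_group_ring
    (p : ℕ) [Fact p.Prime] (G : Type*) [Group G] [Fintype G] (hG : IsPGroup p G)
    (M : Type*) [AddCommGroup M] [Module (MonoidAlgebra ℤ_[p] G) M]
    [Module ℤ_[p] M] [IsScalarTower ℤ_[p] (MonoidAlgebra ℤ_[p] G) M]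
    [Module.Finite (MonoidAlgebra ℤ_[p] G) M]
    (hfree : Module.Free ℤ_[p] M) (hfin : Module.Finite ℤ_[p] M)
    (hpd : ProjDimLEOne (MonoidAlgebra ℤ_[p] G) M) :
    Module.Free (MonoidAlgebra ℤ_[p] G) M := by
  obtain ⟨n, g, hg, hK⟩ := hpd
  haveI := hfree
  have hMproj : Module.Projective ℤ_[p] M := Module.Projective.of_free
  have h1 := PadicFreeAux.projective_of_zp_split hMproj n g hg hK
  exact PadicFreeAux.free_of_projective hG h1
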